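/- arXiv:2505.16357 — 2 statements merged into one kernel-verified Lean document; each statement's English description precedes it below -/
import Mathlib

section
/- With the data of a relational reachability instance (MDP M, m ≥ n ≥ 1, rational q₁,…,q_m, states s₁,…,s_m, surjective index map k, target sets T₁,…,T_m), let v^min = Σ_{c=(s,·)∈Comb} min_{σ∈HR} Σ_{i∈ind(c)} qᵢ · Pr^σ_s(◇Tᵢ) and v^max analogously with max. Then for every rational q and every ε ≥ 0: there exist schedulers σ₁,…,σₙ ∈ HR with |Σ_{i=1}^m qᵢ · Pr^{σ_{k(i)}}_{sᵢ}(◇Tᵢ) − q| > ε if and only if v^max > q + ε or v^min < q − ε. -/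
open scoped BigOperators Classical
open Filter

/-- A finite history: an initial state together with a list of (action, next-state) steps. -/
abbrev Hist (S A : Type*) : Type _ := S × List (A × S)

/-- The last state of a history. -/
def Hist.last {S A : Type*} (π : Hist S A) : S :=
  (π.2.getLast?).elim π.1 Prod.snd

/-- A Markov decision process with finite state space `S` and finite action space `A`:
`P s a s'` is the transition probability, each state has at least one enabled action
(an action whose outgoing probabilities sum to `1`), and the outgoing probabilities
of a non-enabled action sum to `0`. -/
structure MDP (S A : Type*) [Fintype S] [Fintype A] where
  P : S → A → S → ℝ
  nonneg : ∀ s a s', 0 ≤ P s a s'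
  le_one : ∀ s a s', P s a s' ≤ 1
  sum_cases : ∀ s a, (∑ s', P s a s') = 1 ∨ (∑ s', P s a s') = 0
  exists_enabled : ∀ s, ∃ a, (∑ s', P s a s') = 1

namespace MDP

variable {S A : Type*} [Fintype S] [Fintype A]

/-- Action `a` is enabled in state `s`. -/
def enabled (M : MDP S A) (s : S) (a : A) : Prop := (∑ s', M.P s a s') = 1

/-- A state is absorbing if every enabled action loops on it with probability 1. -/
def Absorbing (M : MDP S A) (s : S) : Prop := ∀ a, M.enabled s a → M.P s a s = 1

end MDP

/-- A (history-dependent, randomized) scheduler for `M`: it assigns to every finite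
history a probability distribution over the actions enabled at its last state. -/
structure Scheduler {S A : Type*} [Fintype S] [Fintype A] (M : MDP S A) where
  choice : Hist S A → A → ℝ
  nonneg : ∀ π a, 0 ≤ choice π a
  sum_one : ∀ π, (∑ a, choice π a) = 1
  supp : ∀ π a, ¬ M.enabled (Hist.last π) a → choice π a = 0

namespace Scheduler

variable {S A : Type*} [Fintype S] [Fintype A] {M : MDP S A}

/-- A scheduler is memoryless if its choice only depends on the last state of the history. -/
def Memoryless (σ : Scheduler M) : Prop :=
  ∀ π π' : Hist S A, Hist.last π = Hist.last π' → σ.choice π = σ.choice π'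

/-- A scheduler is deterministic if all its choice probabilities are 0 or 1. -/
def Deterministic (σ : Scheduler M) : Prop :=
  ∀ π a, σ.choice π a = 0 ∨ σ.choice π a = 1

/-- Memoryless deterministic (MD) schedulers. -/
def MD (σ : Scheduler M) : Prop := σ.Memoryless ∧ σ.Deterministic

end Scheduler

/-- Probability of reaching the target set `T` within `n` steps, starting from history `π`,
under scheduler `σ`. -/
noncomputable def reachN {S A : Type*} [Fintype S] [Fintype A] (M : MDP S A)
    (σ : Scheduler M) (T : Set S) : ℕ → Hist S A → ℝ
  | 0, π => if Hist.last π ∈ T then 1 else 0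
  | n + 1, π =>
      if Hist.last π ∈ T then 1
      else ∑ a, σ.choice π a * ∑ s', M.P (Hist.last π) a s' *
        reachN M σ T n (π.1, π.2 ++ [(a, s')])

/-- `Pr M σ s T` is the probability of eventually reaching `T` from state `s` under
scheduler `σ`: the supremum of the step-bounded reachability probabilities. -/
noncomputable def Pr {S A : Type*} [Fintype S] [Fintype A] (M : MDP S A)
    (σ : Scheduler M) (s : S) (T : Set S) : ℝ :=
  ⨆ n : ℕ, reachN M σ T n (s, [])

/-- The set `Comb` of state-scheduler combinations `(sᵢ, k(i))` of a relational
reachability instance. -/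
noncomputable def combSet {S : Type*} [Fintype S] {m n : ℕ}
    (s : Fin m → S) (k : Fin m → Fin n) : Finset (S × Fin n) :=
  Finset.image (fun i => (s i, k i)) Finset.univ

/-- The contribution `Σ_{i ∈ ind(c)} qᵢ · Pr^σ_{c.1}(◇Tᵢ)` of a state-scheduler
combination `c` under a scheduler `σ`. -/
noncomputable def combVal {S A : Type*} [Fintype S] [Fintype A] {m n : ℕ}
    (M : MDP S A) (q : Fin m → ℚ) (s : Fin m → S) (k : Fin m → Fin n)
    (T : Fin m → Set S) (σ : Scheduler M) (c : S × Fin n) : ℝ :=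
  ∑ i ∈ Finset.univ.filter (fun i => (s i, k i) = c), (q i : ℝ) * Pr M σ c.1 (T i)

/-- `v^min`: the sum over all combinations `c` of the infimum over all schedulers of the
contribution of `c`. -/
noncomputable def vMin {S A : Type*} [Fintype S] [Fintype A] {m n : ℕ}
    (M : MDP S A) (q : Fin m → ℚ) (s : Fin m → S) (k : Fin m → Fin n)
    (T : Fin m → Set S) : ℝ :=
  ∑ c ∈ combSet s k, sInf {x : ℝ | ∃ σ : Scheduler M, x = combVal M q s k T σ c}

/-- `v^max`: the sum over all combinations `c` of the supremum over all schedulers of the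
contribution of `c`. -/
noncomputable def vMax {S A : Type*} [Fintype S] [Fintype A] {m n : ℕ}
    (M : MDP S A) (q : Fin m → ℚ) (s : Fin m → S) (k : Fin m → Fin n)
    (T : Fin m → Set S) : ℝ :=
  ∑ c ∈ combSet s k, sSup {x : ℝ | ∃ σ : Scheduler M, x = combVal M q s k T σ c}

/-- The achievable value set
`A = {Σ_{i} qᵢ · Pr^{σ_{k(i)}}_{sᵢ}(◇Tᵢ) : σ₁,…,σₙ ∈ HR}`. -/
noncomputable def achSet {S A : Type*} [Fintype S] [Fintype A] {m n : ℕ}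
    (M : MDP S A) (q : Fin m → ℚ) (s : Fin m → S) (k : Fin m → Fin n)
    (T : Fin m → Set S) : Set ℝ :=
  {x : ℝ | ∃ σ : Fin n → Scheduler M,
    x = ∑ i, (q i : ℝ) * Pr M (σ (k i)) (s i) (T i)}

/-!
The objective splits as a sum over the combinations `c = (s, j)`, and since a history-dependent
scheduler may act differently for each initial state, the `n` schedulers can optimise every
combination independently. So every achievable value lies in `[v^min, v^max]`, and every value
below `v^max` (above `v^min`) is exceeded (undercut) by some choice of schedulers. Hence the
deviation from `q₀` can exceed `ε` exactly when one of the two bounds lies outside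
`[q₀ - ε, q₀ + ε]`.
-/

theorem Finset.exists_lt_sum_of_lt_sum_csSup {ι : Type*} (F : Finset ι) {X : ι → Set ℝ}
    (hX : ∀ i ∈ F, (X i).Nonempty) {x : ℝ} (hx : x < ∑ i ∈ F, sSup (X i)) :
    ∃ y : ι → ℝ, (∀ i ∈ F, y i ∈ X i) ∧ x < ∑ i ∈ F, y i := by
  -- each `y i` loses less than `δ`; dividing by `#F + 1` avoids a case split on `F = ∅`
  set δ := (∑ i ∈ F, sSup (X i) - x) / (F.card + 1)
  have hδ : 0 < δ := div_pos (by linarith) (by positivity)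
  have hy : ∀ i, ∃ y : ℝ, i ∈ F → y ∈ X i ∧ sSup (X i) - δ < y := fun i => by
    by_cases hi : i ∈ F
    · obtain ⟨y, hyX, hy⟩ := exists_lt_of_lt_csSup (hX i hi) (sub_lt_self _ hδ)
      exact ⟨y, fun _ => ⟨hyX, hy⟩⟩
    · exact ⟨0, fun h => absurd h hi⟩
  choose y hy using hy
  refine ⟨y, fun i hi => (hy i hi).1, ?_⟩
  have hloss : ∑ i ∈ F, sSup (X i) - F.card * δ ≤ ∑ i ∈ F, y i := by
    rw [← nsmul_eq_mul, ← Finset.sum_const, ← Finset.sum_sub_distrib]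
    exact Finset.sum_le_sum fun i hi => (hy i hi).2.le
  have hδx : (F.card + 1) * δ = ∑ i ∈ F, sSup (X i) - x := mul_div_cancel₀ _ (by positivity)
  linarith

theorem Finset.exists_sum_lt_of_sum_csInf_lt {ι : Type*} (F : Finset ι) {X : ι → Set ℝ}
    (hX : ∀ i ∈ F, (X i).Nonempty) {x : ℝ} (hx : ∑ i ∈ F, sInf (X i) < x) :
    ∃ y : ι → ℝ, (∀ i ∈ F, y i ∈ X i) ∧ ∑ i ∈ F, y i < x := by
  simp only [Real.sInf_def, Finset.sum_neg_distrib] at hx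
  obtain ⟨y, hyX, hy⟩ :=
    F.exists_lt_sum_of_lt_sum_csSup (fun i hi => (hX i hi).neg) (neg_lt.mp hx)
  refine ⟨-y, fun i hi => Set.mem_neg.mp (hyX i hi), ?_⟩
  simpa only [Pi.neg_apply, Finset.sum_neg_distrib] using neg_lt.mp hy

section Reachability

variable {S A : Type*} [Fintype S] [Fintype A] (M : MDP S A)

namespace Scheduler

noncomputable instance : Inhabited (Scheduler M) where
  default :=
    { choice := fun π a => if a = (M.exists_enabled (Hist.last π)).choose then 1 else 0
      nonneg := fun π a => by split <;> norm_num
      sum_one := fun π => by simp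
      supp := fun π a h => by
        rw [if_neg]
        rintro rfl
        exact h (M.exists_enabled (Hist.last π)).choose_spec }

variable {M}

def glue (τ : S → Scheduler M) : Scheduler M where
  choice π := (τ π.1).choice π
  nonneg π := (τ π.1).nonneg π
  sum_one π := (τ π.1).sum_one π
  supp π := (τ π.1).supp π

end Scheduler

theorem reachN_mem_Icc (σ : Scheduler M) (T : Set S) :
    ∀ N π, reachN M σ T N π ∈ Set.Icc (0 : ℝ) 1
  | 0, π => by unfold reachN; split <;> norm_num
  | N + 1, π => by
    unfold reachN
    split
    · norm_num
    · have hstep : ∀ a, ∑ s', M.P (Hist.last π) a s' * reachN M σ T N (π.1, π.2 ++ [(a, s')])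
          ∈ Set.Icc (0 : ℝ) 1 := fun a => by
        have hle : ∑ s', M.P (Hist.last π) a s' * reachN M σ T N (π.1, π.2 ++ [(a, s')])
            ≤ ∑ s', M.P (Hist.last π) a s' :=
          Finset.sum_le_sum fun s' _ =>
            mul_le_of_le_one_right (M.nonneg _ _ _) (reachN_mem_Icc σ T N _).2
        refine ⟨Finset.sum_nonneg fun s' _ =>
          mul_nonneg (M.nonneg _ _ _) (reachN_mem_Icc σ T N _).1, hle.trans ?_⟩
        rcases M.sum_cases (Hist.last π) a with h | h <;> simp [h]
      refine ⟨Finset.sum_nonneg fun a _ => mul_nonneg (σ.nonneg π a) (hstep a).1, ?_⟩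
      calc _ ≤ ∑ a, σ.choice π a := Finset.sum_le_sum fun a _ =>
              mul_le_of_le_one_right (σ.nonneg π a) (hstep a).2
        _ = 1 := σ.sum_one π

theorem Pr_mem_Icc (σ : Scheduler M) (s : S) (T : Set S) : Pr M σ s T ∈ Set.Icc (0 : ℝ) 1 := by
  have hbdd : BddAbove (Set.range fun N => reachN M σ T N (s, [])) :=
    ⟨1, by rintro _ ⟨N, rfl⟩; exact (reachN_mem_Icc M σ T N _).2⟩
  exact ⟨(reachN_mem_Icc M σ T 0 _).1.trans (le_ciSup hbdd 0),
    ciSup_le fun N => (reachN_mem_Icc M σ T N _).2⟩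

theorem reachN_glue (τ : S → Scheduler M) (T : Set S) :
    ∀ N (π : Hist S A), reachN M (Scheduler.glue τ) T N π = reachN M (τ π.1) T N π
  | 0, π => rfl
  | N + 1, π => by
    simp only [reachN, reachN_glue τ T N]
    rfl

theorem Pr_glue (τ : S → Scheduler M) (s : S) (T : Set S) :
    Pr M (Scheduler.glue τ) s T = Pr M (τ s) s T := by
  simp only [Pr, reachN_glue]

end Reachability

section Relational

variable {S A : Type*} [Fintype S] [Fintype A] (M : MDP S A) {m n : ℕ}
  (q : Fin m → ℚ) (s : Fin m → S) (k : Fin m → Fin n) (T : Fin m → Set S)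

def combValues (c : S × Fin n) : Set ℝ := {x | ∃ σ : Scheduler M, x = combVal M q s k T σ c}

theorem combValues_nonempty (c : S × Fin n) : (combValues M q s k T c).Nonempty :=
  ⟨_, default, rfl⟩

theorem abs_combVal_le (σ : Scheduler M) (c : S × Fin n) :
    |combVal M q s k T σ c| ≤ ∑ i, |(q i : ℝ)| := by
  calc |combVal M q s k T σ c|
      ≤ ∑ i ∈ Finset.univ.filter (fun i => (s i, k i) = c), |(q i : ℝ) * Pr M σ c.1 (T i)| :=
        Finset.abs_sum_le_sum_abs _ _
    _ ≤ ∑ i ∈ Finset.univ.filter (fun i => (s i, k i) = c), |(q i : ℝ)| :=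
        Finset.sum_le_sum fun i _ => by
          obtain ⟨h0, h1⟩ := Pr_mem_Icc M σ c.1 (T i)
          rw [abs_mul, abs_of_nonneg h0]
          exact mul_le_of_le_one_right (abs_nonneg _) h1
    _ ≤ ∑ i, |(q i : ℝ)| :=
        Finset.sum_le_sum_of_subset_of_nonneg (Finset.filter_subset _ _)
          fun i _ _ => abs_nonneg _

theorem combValues_bddAbove (c : S × Fin n) : BddAbove (combValues M q s k T c) :=
  ⟨_, by rintro _ ⟨σ, rfl⟩; exact le_of_abs_le (abs_combVal_le M q s k T σ c)⟩

theorem combValues_bddBelow (c : S × Fin n) : BddBelow (combValues M q s k T c) :=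
  ⟨_, by rintro _ ⟨σ, rfl⟩; exact neg_le_of_abs_le (abs_combVal_le M q s k T σ c)⟩

theorem sum_mul_Pr_eq_sum_combVal (σ : Fin n → Scheduler M) :
    ∑ i, (q i : ℝ) * Pr M (σ (k i)) (s i) (T i)
      = ∑ c ∈ combSet s k, combVal M q s k T (σ c.2) c := by
  rw [← Finset.sum_fiberwise_of_maps_to
    (fun i _ => Finset.mem_image_of_mem (fun i => (s i, k i)) (Finset.mem_univ i))]
  refine Finset.sum_congr rfl fun c _ => Finset.sum_congr rfl fun i hi => ?_
  obtain rfl := (Finset.mem_filter.mp hi).2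
  rfl

theorem sum_mul_Pr_le_vMax (σ : Fin n → Scheduler M) :
    ∑ i, (q i : ℝ) * Pr M (σ (k i)) (s i) (T i) ≤ vMax M q s k T := by
  rw [sum_mul_Pr_eq_sum_combVal]
  exact Finset.sum_le_sum fun c _ => le_csSup (combValues_bddAbove M q s k T c) ⟨σ c.2, rfl⟩

theorem vMin_le_sum_mul_Pr (σ : Fin n → Scheduler M) :
    vMin M q s k T ≤ ∑ i, (q i : ℝ) * Pr M (σ (k i)) (s i) (T i) := by
  rw [sum_mul_Pr_eq_sum_combVal]
  exact Finset.sum_le_sum fun c _ => csInf_le (combValues_bddBelow M q s k T c) ⟨σ c.2, rfl⟩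

theorem exists_sum_mul_Pr_eq {y : S × Fin n → ℝ}
    (hy : ∀ c ∈ combSet s k, y c ∈ combValues M q s k T c) :
    ∃ σ : Fin n → Scheduler M,
      ∑ i, (q i : ℝ) * Pr M (σ (k i)) (s i) (T i) = ∑ c ∈ combSet s k, y c := by
  have hτ : ∀ c, ∃ τ : Scheduler M, c ∈ combSet s k → y c = combVal M q s k T τ c := fun c => by
    by_cases hc : c ∈ combSet s k
    · obtain ⟨τ, hτ⟩ := hy c hc
      exact ⟨τ, fun _ => hτ⟩
    · exact ⟨default, fun h => absurd h hc⟩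
  choose τ hτ using hτ
  let σ : Fin n → Scheduler M := fun j => Scheduler.glue fun st => τ (st, j)
  refine ⟨σ, (sum_mul_Pr_eq_sum_combVal M q s k T σ).trans (Finset.sum_congr rfl fun c hc => ?_)⟩
  simp only [hτ c hc, combVal, σ, Pr_glue]

theorem exists_lt_sum_mul_Pr_of_lt_vMax {x : ℝ} (hx : x < vMax M q s k T) :
    ∃ σ : Fin n → Scheduler M, x < ∑ i, (q i : ℝ) * Pr M (σ (k i)) (s i) (T i) := by
  obtain ⟨y, hyX, hy⟩ := (combSet s k).exists_lt_sum_of_lt_sum_csSup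
    (fun c _ => combValues_nonempty M q s k T c) hx
  obtain ⟨σ, hσ⟩ := exists_sum_mul_Pr_eq M q s k T hyX
  exact ⟨σ, hσ ▸ hy⟩

theorem exists_sum_mul_Pr_lt_of_vMin_lt {x : ℝ} (hx : vMin M q s k T < x) :
    ∃ σ : Fin n → Scheduler M, ∑ i, (q i : ℝ) * Pr M (σ (k i)) (s i) (T i) < x := by
  obtain ⟨y, hyX, hy⟩ := (combSet s k).exists_sum_lt_of_sum_csInf_lt
    (fun c _ => combValues_nonempty M q s k T c) hx
  obtain ⟨σ, hσ⟩ := exists_sum_mul_Pr_eq M q s k T hyX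
  exact ⟨σ, hσ ▸ hy⟩

end Relational

theorem disequality_iff_outside_interval_general
    {S A : Type*} [Fintype S] [Fintype A]
    (M : MDP S A) {m n : ℕ}
    (q : Fin m → ℚ) (s : Fin m → S) (k : Fin m → Fin n)
    (T : Fin m → Set S)
    (q₀ : ℚ) (ε : ℝ) :
    (∃ σ : Fin n → Scheduler M,
        |(∑ i, (q i : ℝ) * Pr M (σ (k i)) (s i) (T i)) - (q₀ : ℝ)| > ε) ↔
      (vMax M q s k T > (q₀ : ℝ) + ε ∨ vMin M q s k T < (q₀ : ℝ) - ε) := by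
  constructor
  · rintro ⟨σ, hσ⟩
    have hmax := sum_mul_Pr_le_vMax M q s k T σ
    have hmin := vMin_le_sum_mul_Pr M q s k T σ
    rcases lt_abs.mp hσ with h | h
    · exact Or.inl (by linarith)
    · exact Or.inr (by linarith)
  · rintro (h | h)
    · obtain ⟨σ, hσ⟩ := exists_lt_sum_mul_Pr_of_lt_vMax M q s k T h
      exact ⟨σ, lt_abs.mpr (Or.inl (by linarith))⟩
    · obtain ⟨σ, hσ⟩ := exists_sum_mul_Pr_lt_of_vMin_lt M q s k T h
      exact ⟨σ, lt_abs.mpr (Or.inr (by linarith))⟩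

/-- For every rational `q₀` and every `ε ≥ 0`, there are schedulers
`σ₁,…,σₙ` with `|Σᵢ qᵢ · Pr^{σ_{k(i)}}_{sᵢ}(◇Tᵢ) − q₀| > ε` if and only if
`v^max > q₀ + ε` or `v^min < q₀ − ε`. -/
theorem disequality_iff_outside_interval
    {S A : Type*} [Fintype S] [Fintype A] [Nonempty S] [Nonempty A]
    (M : MDP S A) {m n : ℕ} (hn : 1 ≤ n) (hmn : n ≤ m)
    (q : Fin m → ℚ) (s : Fin m → S) (k : Fin m → Fin n)
    (hk : Function.Surjective k) (T : Fin m → Set S)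
    (q₀ : ℚ) (ε : ℝ) (hε : 0 ≤ ε) :
    (∃ σ : Fin n → Scheduler M,
        |(∑ i, (q i : ℝ) * Pr M (σ (k i)) (s i) (T i)) - (q₀ : ℝ)| > ε) ↔
      (vMax M q s k T > (q₀ : ℝ) + ε ∨ vMin M q s k T < (q₀ : ℝ) - ε) :=
  disequality_iff_outside_interval_general M q s k T q₀ ε
end

section
/- Consider the MDP with states {s, t₁, t₂}, where state s has two enabled actions α and β with P(s,α,t₁)=1 and P(s,β,t₂)=1, state t₁ has a single enabled action γ with P(t₁,γ,s)=1, and t₂ is absorbing. Then there exists a (memoryful) scheduler σ with Pr^σ_s(◇{t₁}) = Pr^σ_s(◇{t₂}), but every memoryless (possibly randomized) scheduler σ satisfies Pr^σ_s(◇{t₁}) ≠ Pr^σ_s(◇{t₂}). Hence memory is necessary for relational reachability with exact equality. -/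
open scoped BigOperators Classical
open Filter

/-- The concrete transition function: state `0` (= s) has enabled actions `0` (= α, to `t₁`)
and `1` (= β, to `t₂`); state `1` (= t₁) has the single enabled action `2` (= γ, back to `s`);
state `2` (= t₂) is absorbing. -/
noncomputable def P8 : Fin 3 → Fin 3 → Fin 3 → ℝ := fun st a st' =>
  if st = 0 then
    (if a = 0 then (if st' = 1 then 1 else 0)
     else if a = 1 then (if st' = 2 then 1 else 0) else 0)
  else if st = 1 then
    (if a = 2 then (if st' = 0 then 1 else 0) else 0)
  else (if st' = 2 then 1 else 0)

/-!
A memoryless scheduler plays `α` at `s` with the same probability `p` at every visit. It reaches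
`t₁` with probability exactly `p`, since after `β` the run is trapped in `t₂`. The probability
of having reached `t₂` after `2k` steps is `1 - p ^ k`, so `t₂` is reached with probability `1`
when `p < 1` and `0` when `p = 1`; neither equals `p`. A scheduler with memory can play `α` at
the first visit and `β` at the second, and then reaches both targets surely.
-/

namespace Hist

variable {S A : Type*}

@[simp]
lemma last_nil (s : S) : Hist.last ((s, []) : Hist S A) = s := rfl

@[simp]
lemma last_concat (s₀ : S) (l : List (A × S)) (a : A) (s : S) :
    Hist.last ((s₀, l ++ [(a, s)]) : Hist S A) = s := by
  simp [Hist.last]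

@[simp]
lemma last_singleton (s₀ : S) (a : A) (s : S) : Hist.last ((s₀, [(a, s)]) : Hist S A) = s := rfl

end Hist

section General

variable {S A : Type*} [Fintype S] [Fintype A] {M : MDP S A}

lemma MDP.P_eq_zero_of_absorbing {t : S} (ht : M.Absorbing t) (a : A) {s : S} (hs : s ≠ t) :
    M.P t a s = 0 := by
  have hsum : ∑ s', M.P t a s' = M.P t a t + ∑ s' ∈ Finset.univ.erase t, M.P t a s' :=
    (Finset.add_sum_erase _ _ (Finset.mem_univ t)).symm
  have hrest : ∑ s' ∈ Finset.univ.erase t, M.P t a s' = 0 := by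
    rcases M.sum_cases t a with h | h
    · linarith [ht a h]
    · linarith [M.nonneg t a t, Finset.sum_nonneg fun s' (_ : s' ∈ Finset.univ.erase t) =>
        M.nonneg t a s']
  exact (Finset.sum_eq_zero_iff_of_nonneg fun s' _ => M.nonneg t a s').1 hrest s
    (Finset.mem_erase.2 ⟨hs, Finset.mem_univ s⟩)

namespace Scheduler

lemma choice_eq_one_of_unique_enabled (σ : Scheduler M) {π : Hist S A} {a : A}
    (h : ∀ b ≠ a, ¬ M.enabled (Hist.last π) b) : σ.choice π a = 1 := by
  rw [← σ.sum_one π, Finset.sum_eq_single a (fun b _ hb => σ.supp π b (h b hb)) (by simp)]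

noncomputable def ofFun (f : Hist S A → A) (hf : ∀ π, M.enabled (Hist.last π) (f π)) :
    Scheduler M where
  choice π a := if a = f π then 1 else 0
  nonneg π a := by split_ifs <;> norm_num
  sum_one π := by simp
  supp π a h := if_neg fun ha : a = f π => h (ha ▸ hf π)

end Scheduler

variable (σ : Scheduler M) {T : Set S}

lemma reachN_of_mem {π : Hist S A} (hπ : Hist.last π ∈ T) (n : ℕ) : reachN M σ T n π = 1 := by
  cases n <;> simp [reachN, hπ]

lemma reachN_le_one (n : ℕ) (π : Hist S A) : reachN M σ T n π ≤ 1 := by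
  induction n generalizing π with
  | zero => simp only [reachN]; split_ifs <;> norm_num
  | succ n ih =>
    simp only [reachN]
    split_ifs
    · rfl
    · have hstep (a : A) :
          ∑ s', M.P (Hist.last π) a s' * reachN M σ T n (π.1, π.2 ++ [(a, s')]) ≤ 1 :=
        calc _ ≤ ∑ s', M.P (Hist.last π) a s' :=
              Finset.sum_le_sum fun s' _ => mul_le_of_le_one_right (M.nonneg _ _ _) (ih _)
          _ ≤ 1 := by rcases M.sum_cases (Hist.last π) a with h | h <;> linarith
      calc _ ≤ ∑ a, σ.choice π a :=
            Finset.sum_le_sum fun a _ => mul_le_of_le_one_right (σ.nonneg _ _) (hstep a)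
        _ = 1 := σ.sum_one π

lemma bddAbove_range_reachN (s : S) :
    BddAbove (Set.range fun n => reachN M σ T n ((s, []) : Hist S A)) :=
  ⟨1, by rintro _ ⟨n, rfl⟩; exact reachN_le_one σ n _⟩

lemma reachN_le_Pr (s : S) (n : ℕ) : reachN M σ T n (s, []) ≤ Pr M σ s T :=
  le_ciSup (bddAbove_range_reachN σ s) n

lemma Pr_le_one (s : S) : Pr M σ s T ≤ 1 :=
  ciSup_le fun n => reachN_le_one σ n _

lemma Pr_eq_of_reachN_succ_eq {s : S} {c : ℝ} (hc : 0 ≤ c)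
    (h0 : reachN M σ T 0 ((s, []) : Hist S A) = 0)
    (h : ∀ n, reachN M σ T (n + 1) ((s, []) : Hist S A) = c) : Pr M σ s T = c := by
  refine le_antisymm (ciSup_le fun n => ?_) (h 0 ▸ reachN_le_Pr σ s 1)
  cases n with
  | zero => exact h0 ▸ hc
  | succ n => exact (h n).le

lemma reachN_eq_zero_of_absorbing {t : S} (ht : M.Absorbing t) (htT : t ∉ T) (n : ℕ)
    {π : Hist S A} (hπ : Hist.last π = t) : reachN M σ T n π = 0 := by
  induction n generalizing π with
  | zero => simp [reachN, hπ, htT]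
  | succ n ih =>
    simp only [reachN, hπ, if_neg htT]
    refine Finset.sum_eq_zero fun a _ => mul_eq_zero_of_right _ <|
      Finset.sum_eq_zero fun s _ => ?_
    by_cases hs : s = t
    · rw [ih (by simp [hs]), mul_zero]
    · rw [MDP.P_eq_zero_of_absorbing ht a hs, zero_mul]

lemma reachN_eq_of_memoryless (hσ : σ.Memoryless) (n : ℕ) (π : Hist S A) :
    reachN M σ T n π = reachN M σ T n (Hist.last π, []) := by
  induction n generalizing π with
  | zero => rfl
  | succ n ih =>
    simp only [reachN, Hist.last_nil, hσ π (Hist.last π, []) rfl]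
    congr! 5 with a _ s _
    rw [ih, ih (Hist.last π, [] ++ [(a, s)])]
    simp

end General

lemma eq_one_sub_pow_of_two_step_recurrence {u : ℕ → ℝ} {p q : ℝ} (hpq : p + q = 1)
    (h0 : u 0 = 0) (h1 : u 1 = q) (h : ∀ n, u (n + 2) = p * u n + q) (n : ℕ) :
    u n = 1 - p ^ ((n + 1) / 2) := by
  induction n using Nat.twoStepInduction with
  | zero => simp [h0]
  | one => simp [h1]; linarith
  | more n ih _ =>
    rw [h, ih, show (n + 2 + 1) / 2 = (n + 1) / 2 + 1 by omega, pow_succ]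
    linear_combination hpq

namespace P8

variable {M : MDP (Fin 3) (Fin 3)} (hM : M.P = P8)
include hM

lemma enabled_iff_P8 {s a : Fin 3} : M.enabled s a ↔ ∑ s', P8 s a s' = 1 := by
  rw [MDP.enabled, hM]

lemma absorbing_two : M.Absorbing 2 := fun a _ => by simp [hM, P8]

variable (σ : Scheduler M) {T : Set (Fin 3)}

lemma choice_two_of_last_eq_zero {π : Hist (Fin 3) (Fin 3)} (hπ : Hist.last π = 0) :
    σ.choice π 2 = 0 :=
  σ.supp π 2 <| by rw [hπ, enabled_iff_P8 hM]; simp [P8]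

lemma choice_zero_add_choice_one {π : Hist (Fin 3) (Fin 3)} (hπ : Hist.last π = 0) :
    σ.choice π 0 + σ.choice π 1 = 1 := by
  rw [← σ.sum_one π, Fin.sum_univ_three, choice_two_of_last_eq_zero hM σ hπ, add_zero]

lemma reachN_succ_of_last_eq_zero (hT : 0 ∉ T) {π : Hist (Fin 3) (Fin 3)}
    (hπ : Hist.last π = 0) (n : ℕ) :
    reachN M σ T (n + 1) π =
      σ.choice π 0 * reachN M σ T n (π.1, π.2 ++ [(0, 1)]) +
      σ.choice π 1 * reachN M σ T n (π.1, π.2 ++ [(1, 2)]) := by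
  simp [reachN, hπ, hT, hM, Fin.sum_univ_three, P8]

lemma reachN_succ_of_last_eq_one (hT : 1 ∉ T) {π : Hist (Fin 3) (Fin 3)}
    (hπ : Hist.last π = 1) (n : ℕ) :
    reachN M σ T (n + 1) π = reachN M σ T n (π.1, π.2 ++ [(2, 0)]) := by
  have h2 : σ.choice π 2 = 1 := σ.choice_eq_one_of_unique_enabled fun b hb => by
    rw [hπ, enabled_iff_P8 hM]; fin_cases b <;> simp_all [P8]
  simp [reachN, hπ, hT, hM, P8, h2]

lemma Pr_one_eq_choice : Pr M σ 0 {1} = σ.choice (0, []) 0 :=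
  Pr_eq_of_reachN_succ_eq σ (σ.nonneg _ _) (by simp [reachN]) fun n => by
    rw [reachN_succ_of_last_eq_zero hM σ (by simp) rfl, reachN_of_mem σ (by simp),
      reachN_eq_zero_of_absorbing σ (absorbing_two hM) (by simp) n (by simp)]
    ring

noncomputable def alphaThenBeta : Scheduler M :=
  Scheduler.ofFun (fun π => if Hist.last π = 1 then 2 else if π.2 = [] then 0 else 1) fun π => by
    rw [enabled_iff_P8 hM]
    generalize Hist.last π = s
    split_ifs <;> fin_cases s <;> simp_all [P8]

lemma Pr_alphaThenBeta_one : Pr M (alphaThenBeta hM) 0 {1} = 1 := by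
  simp [Pr_one_eq_choice hM, alphaThenBeta, Scheduler.ofFun]

lemma Pr_alphaThenBeta_two : Pr M (alphaThenBeta hM) 0 {2} = 1 := by
  refine le_antisymm (Pr_le_one _ 0) (le_of_eq_of_le ?_ (reachN_le_Pr _ 0 3))
  simp [reachN, hM, P8, Fin.sum_univ_three, alphaThenBeta, Scheduler.ofFun, Hist.last]

lemma reachN_two_eq_of_memoryless (hσ : σ.Memoryless) (n : ℕ) :
    reachN M σ {2} n (0, []) = 1 - σ.choice (0, []) 0 ^ ((n + 1) / 2) := by
  refine eq_one_sub_pow_of_two_step_recurrence (u := fun n => reachN M σ {2} n (0, []))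
    (choice_zero_add_choice_one hM σ (Hist.last_nil 0)) (by simp [reachN]) ?_ (fun n => ?_) n
  · rw [reachN_succ_of_last_eq_zero hM σ (by simp) rfl,
      reachN_of_mem σ (π := (0, [] ++ [(1, 2)])) (by simp)]
    simp [reachN]
  -- after `α` the run is back at `s` two steps later, where memorylessness restarts it
  · rw [reachN_succ_of_last_eq_zero hM σ (by simp) rfl,
      reachN_of_mem σ (π := (0, [] ++ [(1, 2)])) (by simp),
      reachN_eq_of_memoryless σ hσ, reachN_succ_of_last_eq_one hM σ (by simp) (by simp),
      reachN_eq_of_memoryless σ hσ]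
    simp

lemma Pr_one_ne_Pr_two_of_memoryless (hσ : σ.Memoryless) : Pr M σ 0 {1} ≠ Pr M σ 0 {2} := by
  set p := σ.choice (0, []) 0
  have hPr₁ : Pr M σ 0 {1} = p := Pr_one_eq_choice hM σ
  have hPr₂ : Pr M σ 0 {2} = ⨆ n : ℕ, (1 - p ^ ((n + 1) / 2)) :=
    iSup_congr (reachN_two_eq_of_memoryless hM σ hσ)
  have hp₁ : p ≤ 1 := by
    linarith [choice_zero_add_choice_one hM σ (Hist.last_nil 0), σ.nonneg (0, []) 1]
  rcases hp₁.eq_or_lt with hp | hp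
  · simp [hPr₁, hPr₂, hp]
  · have hlim : Tendsto (fun k : ℕ => 1 - p ^ k) atTop (nhds 1) := by
      simpa using tendsto_const_nhds.sub (tendsto_pow_atTop_nhds_zero_of_lt_one (σ.nonneg _ _) hp)
    have hPr₂_ge : 1 ≤ Pr M σ 0 {2} := le_of_tendsto' hlim fun k => by
      calc 1 - p ^ k = reachN M σ {2} (2 * k) (0, []) := by
            rw [reachN_two_eq_of_memoryless hM σ hσ, show (2 * k + 1) / 2 = k by omega]
        _ ≤ Pr M σ 0 {2} := reachN_le_Pr σ 0 _
    rw [hPr₁]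
    exact (hp.trans_le hPr₂_ge).ne

end P8

/-- In the MDP with states `{s, t₁, t₂}` where `P(s,α,t₁) = 1`,
`P(s,β,t₂) = 1`, `P(t₁,γ,s) = 1` and `t₂` absorbing: some (memoryful) scheduler reaches
`t₁` and `t₂` with equal probability, but every memoryless (possibly randomized)
scheduler reaches them with different probabilities.  Hence memory is necessary. -/
theorem memory_necessary
    (M : MDP (Fin 3) (Fin 3)) (hM : M.P = P8) :
    (∃ σ : Scheduler M,
        Pr M σ 0 ({1} : Set (Fin 3)) = Pr M σ 0 ({2} : Set (Fin 3))) ∧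
    (∀ σ : Scheduler M, σ.Memoryless →
        Pr M σ 0 ({1} : Set (Fin 3)) ≠ Pr M σ 0 ({2} : Set (Fin 3))) := by
  refine ⟨⟨P8.alphaThenBeta hM, ?_⟩, P8.Pr_one_ne_Pr_two_of_memoryless hM⟩
  rw [P8.Pr_alphaThenBeta_one, P8.Pr_alphaThenBeta_two]
end
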